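/- Let P be a totally ordered set and V a nonzero pointwise finite dimensional persistence module indexed by P. Then there exists an internal direct sum decomposition V = U ⊕ W such that U is an interval module. -/

import Mathlib

universe u v w w'

/-- A persistence module indexed by a poset `P`, over a field `k`. -/
structure PersMod (k : Type u) [Field k] (P : Type v) [PartialOrder P] :
    Type (max u v (w + 1)) where
  space : P → Type w
  [acg : ∀ x, AddCommGroup (space x)]
  [mod : ∀ x, Module k (space x)]
  map : ∀ {x y : P}, x ≤ y → (space x →ₗ[k] space y)
  map_id : ∀ x : P, map (le_refl x) = LinearMap.id
  map_comp : ∀ {x y z : P} (hxy : x ≤ y) (hyz : y ≤ z),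
    (map hyz).comp (map hxy) = map (hxy.trans hyz)

attribute [instance] PersMod.acg PersMod.mod

variable (k : Type u) [Field k] {P : Type v} [PartialOrder P]

/-- A morphism of persistence modules (a natural transformation). -/
structure PersHom (V : PersMod.{u, v, w} k P) (W : PersMod.{u, v, w'} k P) where
  app : ∀ x : P, V.space x →ₗ[k] W.space x
  natural : ∀ {x y : P} (h : x ≤ y) (v : V.space x),
    app y (V.map h v) = W.map h (app x v)

/-- An isomorphism of persistence modules. -/
structure PersIso (V : PersMod.{u, v, w} k P) (W : PersMod.{u, v, w'} k P) where
  app : ∀ x : P, V.space x ≃ₗ[k] W.space x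
  natural : ∀ {x y : P} (h : x ≤ y) (v : V.space x),
    app y (V.map h v) = W.map h (app x v)

/-- A subset `I` of a poset is convex if `x ≤ y ≤ z`, `x ∈ I`, `z ∈ I` imply `y ∈ I`. -/
def IsConvexIn (I : Set P) : Prop :=
  ∀ ⦃x y z : P⦄, x ∈ I → z ∈ I → x ≤ y → y ≤ z → y ∈ I

/-- A subset `I` of a poset is connected if any two points of `I` are joined by a
zigzag path inside `I`. -/
def IsConnectedIn (I : Set P) : Prop :=
  ∀ x ∈ I, ∀ z ∈ I, ∃ (n : ℕ) (c : ℕ → P), (∀ i ≤ n, c i ∈ I) ∧ c 0 = x ∧ c n = z ∧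
    ∀ i < n, c i ≤ c (i + 1) ∨ c (i + 1) ≤ c i

/-- An interval in a poset: nonempty, convex and connected. -/
def IsPosetInterval (I : Set P) : Prop :=
  I.Nonempty ∧ IsConvexIn I ∧ IsConnectedIn I

open Classical in
/-- The subspace of `k` used as the value of the constant module at `x`. -/
noncomputable def constSub (I : Set P) (x : P) : Submodule k k :=
  if x ∈ I then ⊤ else ⊥

open Classical in
/-- The structure map of the constant module. -/
noncomputable def constMap (I : Set P) (x y : P) :
    constSub k I x →ₗ[k] constSub k I y :=
  LinearMap.codRestrict (constSub k I y)
    ((if y ∈ I then (LinearMap.id : k →ₗ[k] k) else 0).comp (constSub k I x).subtype)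
    (fun c => by
      by_cases hy : y ∈ I
      · simp [constSub, hy]
      · simp only [hy, if_false, LinearMap.zero_comp, LinearMap.zero_apply]
        exact Submodule.zero_mem _)

open Classical in
/-- The constant (interval) module `M(I)` attached to a convex subset `I`. -/
noncomputable def constMod (I : Set P) (hI : IsConvexIn I) : PersMod.{u, v, u} k P where
  space x := constSub k I x
  map {x y} _ := constMap k I x y
  map_id := fun x => by
    ext c
    by_cases hx : x ∈ I
    · simp [constMap, hx]
    · have hc : (c : k) = 0 := by
        have : (c : k) ∈ (⊥ : Submodule k k) :=
          Eq.mp (congrArg (fun S => (c : k) ∈ S) (if_neg hx : constSub k I x = ⊥)) c.2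
        exact (Submodule.mem_bot k).1 this
      simp [constMap, hx, hc]
  map_comp := fun {x y z} hxy hyz => by
    ext c
    by_cases hz : z ∈ I
    · by_cases hy : y ∈ I
      · simp [constMap, hy, hz]
      · have hx : x ∉ I := fun hx => hy (hI hx hz hxy hyz)
        have hc : (c : k) = 0 := by
          have : (c : k) ∈ (⊥ : Submodule k k) :=
            Eq.mp (congrArg (fun S => (c : k) ∈ S) (if_neg hx : constSub k I x = ⊥)) c.2
          exact (Submodule.mem_bot k).1 this
        simp [constMap, hy, hz, hc]
    · simp [constMap, hz]

/-- A submodule of a persistence module: a family of subspaces preserved by the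
structure maps. -/
structure PersSubmod (V : PersMod.{u, v, w} k P) where
  carrier : ∀ x : P, Submodule k (V.space x)
  mapLe : ∀ {x y : P} (h : x ≤ y), ∀ v ∈ carrier x, V.map h v ∈ carrier y

/-- A submodule of a persistence module, viewed as a persistence module in its own
right. -/
def PersSubmod.toPersMod {V : PersMod.{u, v, w} k P} (U : PersSubmod k V) :
    PersMod.{u, v, w} k P where
  space x := U.carrier x
  map {x y} h := (V.map h).restrict (U.mapLe h)
  map_id := fun x => by
    ext c
    simp [LinearMap.restrict_apply, V.map_id]
  map_comp := fun {x y z} hxy hyz => by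
    ext c
    have := LinearMap.congr_fun (V.map_comp hxy hyz) (c : V.space x)
    simpa [LinearMap.restrict_apply] using this

/-- A persistence module is an interval module if it is isomorphic to a constant
module `M(I)` for some interval `I`. -/
def IsIntervalModule (V : PersMod.{u, v, w} k P) : Prop :=
  ∃ (I : Set P) (hI : IsPosetInterval I), Nonempty (PersIso k V (constMod k I hI.2.1))

/-- `A` is an internal direct sum decomposition of `V`:
at each point the subspaces are independent and span everything. -/
def IsDecomp (V : PersMod.{u, v, w} k P) (A : Set (PersSubmod k V)) : Prop :=
  ∀ x : P, iSupIndep (fun U : A => (U : PersSubmod k V).carrier x) ∧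
    ⨆ U : A, (U : PersSubmod k V).carrier x = ⊤

/-- An interval decomposition of `V`. -/
def IsIntervalDecomp (V : PersMod.{u, v, w} k P) (A : Set (PersSubmod k V)) : Prop :=
  IsDecomp k V A ∧ ∀ U ∈ A, IsIntervalModule k U.toPersMod

/-- `V` has an interval decomposition. -/
def HasIntervalDecomp (V : PersMod.{u, v, w} k P) : Prop :=
  ∃ A : Set (PersSubmod k V), IsIntervalDecomp k V A


/-!
Fix `x₀` with `V x₀ ≠ 0`. The images of the maps `V y → V x₀` form a chain of subspaces, so some
`v ≠ 0` lies in each nonzero one; the kernels of the maps `V x₀ → V z` form a chain as well, so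
some functional `f` with `f v = 1` vanishes on each such kernel missing `v`. The points from which
`v` lifts, together with those at which it stays nonzero, form an interval `I`, and by the choice
of `v` the functional `f` determines the same interval in the dual module.

Over a totally ordered index set, a coherent family of nonempty affine subspaces of finite
dimensional spaces has a coherent section: a minimal such family (Zorn) consists of points. This
yields coherent lifts of `v` and coherent extensions of `f`, that is, morphisms `M(I) → V` and
`V → M(I)` with composite the identity; the image of the first is the required summand.
-/

variable {k}

theorem IsChain.sSup_mem {α : Type*} [CompleteLattice α] [WellFoundedGT α] {s : Set α}
    (hs : IsChain (· ≤ ·) s) (hne : s.Nonempty) : sSup s ∈ s := by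
  obtain ⟨m, hm⟩ := exists_maximal_of_wellFoundedGT (· ∈ s) hne
  have hle : ∀ x ∈ s, x ≤ m := fun x hx =>
    (hs.total hx hm.1).elim id fun hmx => hm.2 hx hmx
  rw [le_antisymm (sSup_le hle) (le_sSup hm.1)]
  exact hm.1

theorem Submodule.exists_ne_zero_mem_of_isChain {R M : Type*} [Ring R] [AddCommGroup M]
    [Module R M] [IsArtinian R M] [Nontrivial M] {𝒜 : Set (Submodule R M)}
    (h𝒜 : IsChain (· ≤ ·) 𝒜) : ∃ v : M, v ≠ 0 ∧ ∀ A ∈ 𝒜, A ≠ ⊥ → v ∈ A := by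
  by_cases hne : ∃ A ∈ 𝒜, A ≠ ⊥
  · obtain ⟨A₀, ⟨hA₀, hA₀bot⟩, hmin⟩ :=
      exists_minimal_of_wellFoundedLT (fun A => A ∈ 𝒜 ∧ A ≠ ⊥) hne
    obtain ⟨v, hvA₀, hv⟩ := exists_mem_ne_zero_of_ne_bot hA₀bot
    refine ⟨v, hv, fun A hA hAbot => ?_⟩
    exact (h𝒜.total hA₀ hA).elim (· hvA₀) fun hAA₀ => hmin ⟨hA, hAbot⟩ hAA₀ hvA₀
  · obtain ⟨v, hv⟩ := exists_ne (0 : M)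
    exact ⟨v, hv, fun A hA hAbot => (hne ⟨A, hA, hAbot⟩).elim⟩

theorem Module.exists_dual_eq_one_of_isChain {M : Type*} [AddCommGroup M] [Module k M]
    [IsNoetherian k M] {𝒦 : Set (Submodule k M)} (h𝒦 : IsChain (· ≤ ·) 𝒦) {v : M}
    (hv : v ≠ 0) :
    ∃ f : Module.Dual k M, f v = 1 ∧ ∀ K ∈ 𝒦, v ∉ K → K ≤ LinearMap.ker f := by
  set N := sSup {K ∈ 𝒦 | v ∉ K}
  have hvN : v ∉ N := by
    rcases Set.eq_empty_or_nonempty {K ∈ 𝒦 | v ∉ K} with hempty | hne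
    · simpa [N, hempty] using hv
    · exact (IsChain.sSup_mem (h𝒦.mono fun K hK => hK.1) hne).2
  obtain ⟨f, hfv, hfN⟩ := N.exists_dual_map_eq_bot_of_notMem hvN inferInstance
  refine ⟨(f v)⁻¹ • f, inv_mul_cancel₀ hfv, fun K hK hvK w hw => ?_⟩
  have : f w ∈ N.map f :=
    Submodule.mem_map_of_mem (le_sSup (s := {K ∈ 𝒦 | v ∉ K}) ⟨hK, hvK⟩ hw)
  rw [hfN, Submodule.mem_bot] at this
  simp [this]

theorem Module.Dual.isCompl_span_singleton_ker {M : Type*} [AddCommGroup M] [Module k M]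
    {f : Module.Dual k M} {a : M} (h : f a = 1) : IsCompl (k ∙ a) (LinearMap.ker f) :=
  (Submodule.isCompl_span_singleton_of_isCoatom_of_notMem
    (LinearMap.isCoatom_ker_of_surjective fun c => ⟨c • a, by simp [h]⟩) (by simp [h])).symm

theorem AffineSubspace.nonempty_sInf_of_isChain {R W Q : Type*} [Ring R] [AddCommGroup W]
    [Module R W] [AddTorsor W Q] [IsArtinian R W] {𝒮 : Set (AffineSubspace R Q)}
    (h𝒮 : IsChain (· ≤ ·) 𝒮) (hne : 𝒮.Nonempty) (hA : ∀ A ∈ 𝒮, (A : Set Q).Nonempty) :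
    ((sInf 𝒮 : AffineSubspace R Q) : Set Q).Nonempty := by
  obtain ⟨A₀, hA₀, hmin⟩ := exists_minimalFor_of_wellFoundedLT (· ∈ 𝒮) direction hne
  have hle : ∀ B ∈ 𝒮, A₀ ≤ B := fun B hB => (h𝒮.total hA₀ hB).elim id fun hBA₀ =>
    (eq_or_lt_of_le hBA₀).elim (fun h => h ▸ le_rfl) fun hlt =>
      ((direction_lt_of_nonempty hlt (hA B hB)).not_ge (hmin hB (direction_le hBA₀))).elim
  exact (hA A₀ hA₀).mono (SetLike.coe_subset_coe.2 (le_sInf hle))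

theorem isPosetInterval_of_isConvexIn {Q : Type*} [LinearOrder Q] {I : Set Q} (hne : I.Nonempty)
    (hI : IsConvexIn I) : IsPosetInterval I := by
  refine ⟨hne, hI, fun x hx z hz => ⟨1, fun i => if i = 0 then x else z, ?_, rfl, rfl, ?_⟩⟩
  · intro i _
    dsimp only
    split_ifs <;> assumption
  · intro i hi
    obtain rfl : i = 0 := by omega
    simpa using le_total x z

theorem mem_constSub {X : Type v} {I : Set X} {x : X} {c : k} :
    c ∈ constSub k I x ↔ x ∈ I ∨ c = 0 := by
  unfold constSub
  split_ifs with hx <;> simp [hx]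

open Classical in
theorem coe_constMap {X : Type v} {I : Set X} {x y : X} (c : constSub k I x) :
    (constMap k I x y c : k) = if y ∈ I then (c : k) else 0 := by
  unfold constMap
  split_ifs <;> simp

namespace PersMod

section Basic

variable (V : PersMod.{u, v, w} k P)

@[simp]
theorem map_map {x y z : P} (hxy : x ≤ y) (hyz : y ≤ z) (a : V.space x) :
    V.map hyz (V.map hxy a) = V.map (hxy.trans hyz) a :=
  LinearMap.congr_fun (V.map_comp hxy hyz) a

@[simp]
theorem map_self {x : P} (h : x ≤ x) (a : V.space x) : V.map h a = a :=
  LinearMap.congr_fun (V.map_id x) a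

theorem range_map_le_range_map {x y z : P} (hxy : x ≤ y) (hyz : y ≤ z) :
    LinearMap.range (V.map (hxy.trans hyz)) ≤ LinearMap.range (V.map hyz) := by
  rw [← V.map_comp hxy hyz]
  exact LinearMap.range_comp_le_range _ _

theorem ker_map_le_ker_map {x y z : P} (hxy : x ≤ y) (hyz : y ≤ z) :
    LinearMap.ker (V.map hxy) ≤ LinearMap.ker (V.map (hxy.trans hyz)) := by
  rw [← V.map_comp hxy hyz]
  exact LinearMap.ker_le_ker_comp _ _

-- reducible, so that the instances and simp lemmas about `V` apply through them
abbrev restrict (S : Set P) : PersMod.{u, v, w} k S where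
  space x := V.space x
  map h := V.map h
  map_id x := V.map_id x
  map_comp h h' := V.map_comp h h'

abbrev dual : PersMod.{u, v, max u w} k Pᵒᵈ where
  space x := Module.Dual k (V.space (OrderDual.ofDual x))
  map {x y} h := (V.map (OrderDual.ofDual_le_ofDual.2 h)).dualMap
  map_id x := by ext; simp
  map_comp h h' := by ext; simp

def liftSet {x₀ : P} (v : V.space x₀) : Set P :=
  {y | ∃ h : y ≤ x₀, v ∈ LinearMap.range (V.map h)}

def aliveSet {x₀ : P} (v : V.space x₀) : Set P :=
  {z | ∃ h : x₀ ≤ z, V.map h v ≠ 0}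

def intervalOf {x₀ : P} (v : V.space x₀) : Set P :=
  V.liftSet v ∪ V.aliveSet v

-- `u` encodes the morphism `M(I) → V` sending `1 ∈ k` to `u x` at each `x ∈ I`
structure IsIntervalSection (I : Set P) (u : ∀ x, V.space x) : Prop where
  eq_zero : ∀ x ∉ I, u x = 0
  map_eq : ∀ {x y : P} (h : x ≤ y), x ∈ I → V.map h (u x) = u y

-- `f` encodes the morphism `V → M(I)` given at each `x ∈ I` by the functional `f x`
structure IsIntervalCosection (I : Set P) (f : ∀ x, Module.Dual k (V.space x)) : Prop where
  eq_zero : ∀ x ∉ I, f x = 0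
  comp_eq : ∀ {x y : P} (h : x ≤ y), y ∈ I → (f y).comp (V.map h) = f x

end Basic

section AffineSystem

variable {Q : Type*} [PartialOrder Q] (V : PersMod.{u, _, w} k Q)

structure IsAffineSystem (F : ∀ q, AffineSubspace k (V.space q)) : Prop where
  nonempty : ∀ q, (F q : Set (V.space q)).Nonempty
  map_mem : ∀ {a b : Q} (h : a ≤ b), ∀ x ∈ F a, V.map h x ∈ F b

variable {V} [∀ q, FiniteDimensional k (V.space q)]

theorem IsAffineSystem.sInf_of_isChain {𝒞 : Set (∀ q, AffineSubspace k (V.space q))}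
    (h𝒞 : ∀ G ∈ 𝒞, V.IsAffineSystem G) (hchain : IsChain (· ≤ ·) 𝒞) (hne : 𝒞.Nonempty) :
    V.IsAffineSystem (sInf 𝒞) where
  nonempty q := by
    rw [sInf_apply, ← sInf_range]
    refine AffineSubspace.nonempty_sInf_of_isChain ?_
      (Set.range_nonempty_iff_nonempty.2 hne.to_subtype) ?_
    · rintro _ ⟨G, rfl⟩ _ ⟨G', rfl⟩ -
      exact (hchain.total G.2 G'.2).imp (· q) (· q)
    · rintro _ ⟨⟨G, hG⟩, rfl⟩
      exact (h𝒞 G hG).nonempty q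
  map_mem h x hx := by
    simp only [sInf_apply, ← sInf_range, AffineSubspace.mem_sInf_iff,
      Set.forall_mem_range] at hx ⊢
    exact fun G => (h𝒞 G G.2).map_mem h x (hx G)

theorem exists_minimal_isAffineSystem {F : ∀ q, AffineSubspace k (V.space q)}
    (hF : V.IsAffineSystem F) : ∃ G ≤ F, Minimal V.IsAffineSystem G := by
  obtain ⟨G, hFG, hG⟩ := zorn_le_nonempty₀ (α := (∀ q, AffineSubspace k (V.space q))ᵒᵈ)
    {G | V.IsAffineSystem (OrderDual.ofDual G)}
    (fun 𝒞 h𝒞 hchain H hH => ⟨sSup 𝒞, IsAffineSystem.sInf_of_isChain h𝒞 hchain.symm ⟨H, hH⟩,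
      fun _ => le_sSup⟩) (OrderDual.toDual F) hF
  exact ⟨OrderDual.ofDual G, hFG, minimal_toDual.1 hG⟩

end AffineSystem

section InverseLimit

variable {Q : Type*} [LinearOrder Q] {V : PersMod.{u, _, w} k Q}
  [∀ q, FiniteDimensional k (V.space q)]

theorem exists_map_eq_of_minimal {G : ∀ q, AffineSubspace k (V.space q)}
    (hG : Minimal V.IsAffineSystem G) {a b : Q} (h : a ≤ b) {y : V.space b} (hy : y ∈ G b) :
    ∃ x ∈ G a, V.map h x = y := by
  -- `G'` is the system of stable images; minimality forces `G ≤ G'`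
  set G' : ∀ b, AffineSubspace k (V.space b) := fun b =>
    sInf {A | ∃ a, ∃ h : a ≤ b, A = (G a).map (V.map h).toAffineMap}
  have hmem : ∀ {b} {y : V.space b}, y ∈ G' b ↔ ∀ a (h : a ≤ b), ∃ x ∈ G a, V.map h x = y := by
    intro b y
    simp only [G', AffineSubspace.mem_sInf_iff, Set.mem_ofPred_eq]
    constructor
    · intro H a h
      simpa using H _ ⟨a, h, rfl⟩
    · rintro H _ ⟨a, h, rfl⟩
      simpa using H a h
  have hG'G : G' ≤ G := fun b y hy => by
    obtain ⟨x, hx, rfl⟩ := hmem.1 hy b le_rfl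
    simpa using hx
  have hchain : ∀ {a a' b} (ha : a ≤ b) (ha' : a' ≤ b), a ≤ a' →
      (G a).map (V.map ha).toAffineMap ≤ (G a').map (V.map ha').toAffineMap := by
    intro a a' b ha ha' haa' y hy
    obtain ⟨x, hx, rfl⟩ := AffineSubspace.mem_map.1 hy
    exact AffineSubspace.mem_map.2 ⟨V.map haa' x, hG.1.map_mem haa' x hx, by simp⟩
  have hG' : V.IsAffineSystem G' := by
    refine ⟨fun b => ?_, fun {b c} hbc y hy => hmem.2 fun a hac => ?_⟩
    · refine AffineSubspace.nonempty_sInf_of_isChain ?_ ⟨_, b, le_rfl, rfl⟩ ?_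
      · rintro _ ⟨a, ha, rfl⟩ _ ⟨a', ha', rfl⟩ -
        exact (le_total a a').imp (hchain ha ha') (hchain ha' ha)
      · rintro _ ⟨a, ha, rfl⟩
        obtain ⟨x, hx⟩ := hG.1.nonempty a
        exact ⟨_, AffineSubspace.mem_map_of_mem _ hx⟩
    · rcases le_total a b with hab | hba
      · obtain ⟨x, hx, rfl⟩ := hmem.1 hy a hab
        exact ⟨x, hx, by simp⟩
      · exact ⟨V.map hba y, hG.1.map_mem hba y (hG'G b hy), by simp⟩
  obtain ⟨x, hx, rfl⟩ := hmem.1 (hG.2 hG' hG'G b hy) a h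
  exact ⟨x, hx, rfl⟩

theorem eq_of_mem_of_minimal {G : ∀ q, AffineSubspace k (V.space q)}
    (hG : Minimal V.IsAffineSystem G) {q : Q} {p p' : V.space q} (hp : p ∈ G q)
    (hp' : p' ∈ G q) : p' = p := by
  -- `G''` cuts `G` down to the points compatible with `p`; minimality forces `G ≤ G''`
  set G'' : ∀ a, AffineSubspace k (V.space a) := fun a =>
    if h : a ≤ q then G a ⊓ (affineSpan k {p}).comap (V.map h).toAffineMap
    else affineSpan k {V.map (le_of_not_ge h) p}
  have hmem_le : ∀ {a} (h : a ≤ q) {x}, x ∈ G'' a ↔ x ∈ G a ∧ V.map h x = p := by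
    intro a h x
    simp [G'', h, AffineSubspace.mem_inf_iff, AffineSubspace.mem_comap]
  have hmem_gt : ∀ {a} (h : ¬ a ≤ q) {x}, x ∈ G'' a ↔ x = V.map (le_of_not_ge h) p := by
    intro a h x
    simp [G'', h]
  have hG''G : G'' ≤ G := fun a x hx => by
    by_cases h : a ≤ q
    · exact ((hmem_le h).1 hx).1
    · rw [hmem_gt h] at hx
      exact hx ▸ hG.1.map_mem _ p hp
  have hG'' : V.IsAffineSystem G'' := by
    refine ⟨fun a => ?_, fun {a b} hab x hx => ?_⟩
    · by_cases h : a ≤ q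
      · obtain ⟨x, hx, hxp⟩ := exists_map_eq_of_minimal hG h hp
        exact ⟨x, (hmem_le h).2 ⟨hx, hxp⟩⟩
      · exact ⟨_, (hmem_gt h).2 rfl⟩
    · by_cases hb : b ≤ q
      · obtain ⟨hx, hxp⟩ := (hmem_le (hab.trans hb)).1 hx
        exact (hmem_le hb).2 ⟨hG.1.map_mem hab x hx, by simpa using hxp⟩
      · rw [hmem_gt hb]
        by_cases ha : a ≤ q
        · obtain ⟨-, rfl⟩ := (hmem_le ha).1 hx
          simp
        · rw [(hmem_gt ha).1 hx]
          simp
  simpa using ((hmem_le le_rfl).1 (hG.2 hG'' hG''G q hp')).2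

theorem exists_section_mem {F : ∀ q, AffineSubspace k (V.space q)} (hF : V.IsAffineSystem F) :
    ∃ s : ∀ q, V.space q, (∀ q, s q ∈ F q) ∧ ∀ {a b} (h : a ≤ b), V.map h (s a) = s b := by
  obtain ⟨G, hGF, hG⟩ := exists_minimal_isAffineSystem hF
  choose s hs using hG.1.nonempty
  exact ⟨s, fun q => hGF q (hs q),
    fun h => eq_of_mem_of_minimal hG (hs _) (hG.1.map_mem h _ (hs _))⟩

end InverseLimit

section IntervalOf

variable {V : PersMod.{u, v, w} k P} {x₀ : P} {v : V.space x₀}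

theorem self_mem_liftSet : x₀ ∈ V.liftSet v :=
  ⟨le_rfl, v, V.map_self _ v⟩

theorem le_of_mem_liftSet {y : P} (hy : y ∈ V.liftSet v) : y ≤ x₀ :=
  hy.1

theorem mem_liftSet_of_le {y y' : P} (hy : y ∈ V.liftSet v) (hyy' : y ≤ y') (hy' : y' ≤ x₀) :
    y' ∈ V.liftSet v := by
  obtain ⟨h, a, rfl⟩ := hy
  exact ⟨hy', V.map hyy' a, by simp⟩

theorem le_of_mem_aliveSet {z : P} (hz : z ∈ V.aliveSet v) : x₀ ≤ z :=
  hz.1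

theorem mem_aliveSet_of_le {z z' : P} (hz : z ∈ V.aliveSet v) (hx₀z' : x₀ ≤ z')
    (hz' : z' ≤ z) : z' ∈ V.aliveSet v := by
  obtain ⟨h, hv⟩ := hz
  refine ⟨hx₀z', fun h0 => hv ?_⟩
  rw [← V.map_map hx₀z' hz', h0, map_zero]

theorem map_eq_zero_of_notMem_aliveSet {z : P} (h : x₀ ≤ z) (hz : z ∉ V.aliveSet v) :
    V.map h v = 0 :=
  not_not.1 fun hv => hz ⟨h, hv⟩

theorem mem_liftSet_of_mem_intervalOf {x y : P} (hx : x ∈ V.intervalOf v) (hxy : x ≤ y)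
    (hy : y ≤ x₀) : y ∈ V.liftSet v := by
  rcases hx with hx | hx
  · exact mem_liftSet_of_le hx hxy hy
  · obtain rfl := le_antisymm hy ((le_of_mem_aliveSet hx).trans hxy)
    exact self_mem_liftSet

theorem preimage_intervalOf_eq_dual_intervalOf {f : Module.Dual k (V.space x₀)} (hfv : f v = 1)
    (hker : ∀ z (h : x₀ ≤ z), V.map h v ≠ 0 → LinearMap.ker (V.map h) ≤ LinearMap.ker f)
    (hrange : ∀ y (h : y ≤ x₀), v ∉ LinearMap.range (V.map h) →
      LinearMap.range (V.map h) ≤ LinearMap.ker f) :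
    OrderDual.ofDual ⁻¹' V.intervalOf v = V.dual.intervalOf (x₀ := OrderDual.toDual x₀) f := by
  ext x
  simp only [Set.mem_preimage, intervalOf, Set.mem_union]
  -- where `v` survives, `f` extends; where `v` lifts, `f` survives
  rw [or_comm]
  refine or_congr ⟨fun ⟨h, hw⟩ => ⟨h, ?_⟩, fun ⟨h, hw⟩ => ⟨h, ?_⟩⟩
    ⟨fun ⟨h, hw⟩ => ⟨h, ?_⟩, fun ⟨h, hw⟩ => ⟨h, ?_⟩⟩
  · change f ∈ LinearMap.range (V.map h).dualMap
    rw [LinearMap.range_dualMap_eq_dualAnnihilator_ker, Submodule.mem_dualAnnihilator]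
    exact fun a ha => hker _ h hw ha
  · obtain ⟨g, rfl⟩ := hw
    intro h0
    have : g (V.map (x := x₀) (y := OrderDual.ofDual x) h v) = 1 := hfv
    rw [h0, map_zero] at this
    exact zero_ne_one this
  · obtain ⟨a, rfl⟩ := hw
    intro h0
    have : f (V.map (x := OrderDual.ofDual x) (y := x₀) h a) = 0 := LinearMap.congr_fun h0 a
    rw [hfv] at this
    exact one_ne_zero this
  · by_contra hvr
    refine hw (LinearMap.ext fun a => ?_)
    exact hrange _ (OrderDual.toDual_le.1 h) hvr (LinearMap.mem_range_self _ a)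

end IntervalOf

section LinearOrder

variable {Q : Type v} [LinearOrder Q] {V : PersMod.{u, v, w} k Q} {x₀ : Q}

theorem isPosetInterval_intervalOf (v : V.space x₀) : IsPosetInterval (V.intervalOf v) := by
  refine isPosetInterval_of_isConvexIn ⟨x₀, Or.inl self_mem_liftSet⟩ ?_
  intro x y z hx hz hxy hyz
  rcases le_total y x₀ with hy | hy
  · exact Or.inl (mem_liftSet_of_mem_intervalOf hx hxy hy)
  · rcases hz with hz | hz
    · obtain rfl := le_antisymm (hyz.trans (le_of_mem_liftSet hz)) hy
      exact Or.inl self_mem_liftSet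
    · exact Or.inr (mem_aliveSet_of_le hz hy hyz)

theorem exists_apply_eq_one_ker_le_range_le (x₀ : Q) [FiniteDimensional k (V.space x₀)]
    [Nontrivial (V.space x₀)] :
    ∃ (v : V.space x₀) (f : Module.Dual k (V.space x₀)), f v = 1 ∧
      (∀ z (h : x₀ ≤ z), V.map h v ≠ 0 → LinearMap.ker (V.map h) ≤ LinearMap.ker f) ∧
      ∀ y (h : y ≤ x₀), v ∉ LinearMap.range (V.map h) →
        LinearMap.range (V.map h) ≤ LinearMap.ker f := by
  -- `v` lies in every nonzero image `V_{y,x₀}`, and `f` kills every kernel `V_{x₀,z}` missing `v`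
  obtain ⟨v, hv, hvA⟩ := Submodule.exists_ne_zero_mem_of_isChain
    (𝒜 := Set.range fun y : {y // y ≤ x₀} => LinearMap.range (V.map y.2)) (by
      rintro _ ⟨⟨y, hy⟩, rfl⟩ _ ⟨⟨y', hy'⟩, rfl⟩ -
      exact (le_total y y').imp (fun h => V.range_map_le_range_map h hy')
        (fun h => V.range_map_le_range_map h hy))
  obtain ⟨f, hfv, hfK⟩ := Module.exists_dual_eq_one_of_isChain
    (𝒦 := Set.range fun z : {z // x₀ ≤ z} => LinearMap.ker (V.map z.2)) (by
      rintro _ ⟨⟨z, hz⟩, rfl⟩ _ ⟨⟨z', hz'⟩, rfl⟩ -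
      exact (le_total z z').imp (fun h => V.ker_map_le_ker_map hz h)
        (fun h => V.ker_map_le_ker_map hz' h)) hv
  refine ⟨v, f, hfv, fun z h hvz => hfK _ ⟨⟨z, h⟩, rfl⟩ (by simpa using hvz), fun y h hvy => ?_⟩
  rw [not_not.1 fun hne => hvy (hvA _ ⟨⟨y, h⟩, rfl⟩ hne)]
  exact bot_le

variable [∀ x, FiniteDimensional k (V.space x)]

theorem exists_coherent_lifts (v : V.space x₀) :
    ∃ s : ∀ y, V.space y, (∀ y (h : y ≤ x₀), y ∈ V.liftSet v → V.map h (s y) = v) ∧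
      ∀ {y y'} (h : y ≤ y'), y ∈ V.liftSet v → y' ∈ V.liftSet v → V.map h (s y) = s y' := by
  classical
  have hF : (V.restrict (V.liftSet v)).IsAffineSystem
      fun y => (affineSpan k {v}).comap (V.map (le_of_mem_liftSet y.2)).toAffineMap := by
    refine ⟨fun y => ?_, fun h a ha => ?_⟩
    · obtain ⟨h, a, ha⟩ := y.2
      exact ⟨a, by simpa [AffineSubspace.mem_comap] using ha⟩
    · simpa [AffineSubspace.mem_comap] using ha
  obtain ⟨s, hs, hcoh⟩ := (V.restrict (V.liftSet v)).exists_section_mem hF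
  refine ⟨fun y => if hy : y ∈ V.liftSet v then s ⟨y, hy⟩ else 0, fun y h hy => ?_,
    fun h hy hy' => ?_⟩
  · dsimp only
    rw [dif_pos hy]
    exact (AffineSubspace.mem_affineSpan_singleton k _).1
      (AffineSubspace.mem_comap.1 (hs ⟨y, hy⟩))
  · dsimp only
    rw [dif_pos hy, dif_pos hy']
    exact hcoh (a := ⟨_, hy⟩) (b := ⟨_, hy'⟩) h

theorem exists_isIntervalSection_intervalOf (v : V.space x₀) :
    ∃ u, V.IsIntervalSection (V.intervalOf v) u ∧ u x₀ = v := by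
  classical
  obtain ⟨s, hs, hcoh⟩ := exists_coherent_lifts v
  set u : ∀ x, V.space x := fun x =>
    if x ∈ V.liftSet v then s x else if h : x₀ ≤ x then V.map h v else 0
  have hu_lift : ∀ {x}, x ∈ V.liftSet v → u x = s x := fun hx => if_pos hx
  have hu_out : ∀ {x} (h : x₀ ≤ x), x ∉ V.liftSet v → u x = V.map h v := fun h hx => by
    simp [u, hx, h]
  refine ⟨u, ⟨fun x hx => ?_, fun {x y} h hx => ?_⟩, ?_⟩
  · simp only [intervalOf, Set.mem_union, not_or] at hx
    simp only [u, if_neg hx.1]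
    split_ifs with h
    · exact map_eq_zero_of_notMem_aliveSet h hx.2
    · rfl
  · by_cases hy : y ∈ V.liftSet v
    · have hxl := mem_liftSet_of_mem_intervalOf hx le_rfl (h.trans (le_of_mem_liftSet hy))
      rw [hu_lift hxl, hu_lift hy, hcoh h hxl hy]
    · have hx₀y : x₀ ≤ y :=
        (le_total y x₀).resolve_left fun hyx₀ => hy (mem_liftSet_of_mem_intervalOf hx h hyx₀)
      rw [hu_out hx₀y hy]
      by_cases hxl : x ∈ V.liftSet v
      · rw [hu_lift hxl, ← hs x (le_of_mem_liftSet hxl) hxl, map_map]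
      · rw [hu_out (le_of_mem_aliveSet (hx.resolve_left hxl)) hxl, map_map]
  · rw [hu_lift self_mem_liftSet]
    simpa using hs x₀ le_rfl self_mem_liftSet

end LinearOrder

section Splitting

variable {V : PersMod.{u, v, w} k P} {I : Set P} {u : ∀ x, V.space x}
  {f : ∀ x, Module.Dual k (V.space x)}

theorem IsIntervalSection.isIntervalCosection_of_dual {g : ∀ x : Pᵒᵈ, V.dual.space x}
    (hg : V.dual.IsIntervalSection (OrderDual.ofDual ⁻¹' I) g) :
    V.IsIntervalCosection I fun x => g (OrderDual.toDual x) :=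
  ⟨fun x hx => hg.eq_zero (OrderDual.toDual x) hx,
    fun h hy => hg.map_eq (OrderDual.toDual_le_toDual.2 h) hy⟩

theorem IsIntervalCosection.apply_map_eq (hf : V.IsIntervalCosection I f) {x y : P} (h : x ≤ y)
    (hy : y ∈ I) (a : V.space x) : f y (V.map h a) = f x a :=
  LinearMap.congr_fun (hf.comp_eq h hy) a

theorem IsIntervalSection.pairing_eq_of_le (hu : V.IsIntervalSection I u)
    (hf : V.IsIntervalCosection I f) {x y : P} (h : x ≤ y) (hx : x ∈ I) (hy : y ∈ I) :
    f y (u y) = f x (u x) := by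
  rw [← hu.map_eq h hx, hf.apply_map_eq h hy]

def IsIntervalSection.spanSubmod (hu : V.IsIntervalSection I u) : PersSubmod k V where
  carrier x := k ∙ u x
  mapLe {x y} h a ha := by
    obtain ⟨c, rfl⟩ := Submodule.mem_span_singleton.1 ha
    by_cases hx : x ∈ I
    · rw [map_smul, hu.map_eq h hx]
      exact Submodule.smul_mem _ _ (Submodule.mem_span_singleton_self _)
    · simp [hu.eq_zero x hx]

def IsIntervalCosection.kerSubmod (hf : V.IsIntervalCosection I f) : PersSubmod k V where
  carrier x := LinearMap.ker (f x)
  mapLe {x y} h a ha := by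
    rw [LinearMap.mem_ker] at ha ⊢
    by_cases hy : y ∈ I
    · rw [hf.apply_map_eq h hy, ha]
    · rw [hf.eq_zero _ hy, LinearMap.zero_apply]

theorem isCompl_spanSubmod_kerSubmod (hu : V.IsIntervalSection I u)
    (hf : V.IsIntervalCosection I f) (hfu : ∀ x ∈ I, f x (u x) = 1) (x : P) :
    IsCompl (hu.spanSubmod.carrier x) (hf.kerSubmod.carrier x) := by
  by_cases hx : x ∈ I
  · exact Module.Dual.isCompl_span_singleton_ker (hfu x hx)
  · simp only [IsIntervalSection.spanSubmod, IsIntervalCosection.kerSubmod, hu.eq_zero x hx,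
      hf.eq_zero x hx, Submodule.span_zero_singleton, LinearMap.ker_zero]
    exact isCompl_bot_top

theorem isIntervalModule_spanSubmod (hI : IsPosetInterval I) (hu : V.IsIntervalSection I u)
    (hf : V.IsIntervalCosection I f) (hfu : ∀ x ∈ I, f x (u x) = 1) :
    IsIntervalModule k hu.spanSubmod.toPersMod := by
  let e : ∀ x, (k ∙ u x) →ₗ[k] constSub k I x := fun x =>
    LinearMap.codRestrict _ ((f x).comp (k ∙ u x).subtype) fun a =>
      mem_constSub.2 <| (em (x ∈ I)).imp_right fun hx => by simp [hf.eq_zero x hx]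
  have he : ∀ x, Function.Bijective (e x) := by
    intro x
    by_cases hx : x ∈ I
    · have hrepr : ∀ a : k ∙ u x, (a : V.space x) = f x a • u x := fun a => by
        obtain ⟨c, hc⟩ := Submodule.mem_span_singleton.1 a.2
        rw [← hc, map_smul, hfu x hx, smul_eq_mul, mul_one]
      refine ⟨fun a b hab => Subtype.ext ?_, fun c => ⟨⟨(c : k) • u x,
        Submodule.smul_mem _ _ (Submodule.mem_span_singleton_self _)⟩, Subtype.ext ?_⟩⟩
      · rw [hrepr a, hrepr b]
        exact congrArg (· • u x) (congrArg Subtype.val hab)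
      · simp [e, hfu x hx]
    · have hzero : ∀ a : k ∙ u x, (a : V.space x) = 0 := fun a => by
        simpa [hu.eq_zero x hx] using a.2
      refine ⟨fun a b _ => Subtype.ext ((hzero a).trans (hzero b).symm), fun c => ⟨0, ?_⟩⟩
      exact Subtype.ext ((mem_constSub.1 c.2).resolve_left hx ▸ by simp)
  refine ⟨I, hI, ⟨⟨fun x => LinearEquiv.ofBijective (e x) (he x), fun {x y} h a => ?_⟩⟩⟩
  apply Subtype.ext
  change f y (V.map h ((show k ∙ u x from a) : V.space x)) = (constMap k I x y (e x a) : k)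
  rw [coe_constMap]
  split_ifs with hy
  · exact hf.apply_map_eq h hy _
  · rw [hf.eq_zero y hy, LinearMap.zero_apply]

end Splitting

end PersMod

/-- Every nonzero pointwise finite dimensional persistence module over a totally
ordered set has a direct summand which is an interval module. -/
theorem exists_interval_summand_of_linearOrder (P : Type v) [LinearOrder P]
    (V : PersMod.{u, v, w} k P) (hfd : ∀ x : P, FiniteDimensional k (V.space x))
    (hV : ∃ (x : P) (v : V.space x), v ≠ 0) :
    ∃ U W : PersSubmod k V, (∀ x : P, IsCompl (U.carrier x) (W.carrier x)) ∧
      IsIntervalModule k U.toPersMod := by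
  obtain ⟨x₀, v₀, hv₀⟩ := hV
  have : Nontrivial (V.space x₀) := ⟨⟨v₀, 0, hv₀⟩⟩
  obtain ⟨v, f, hfv, hker, hrange⟩ := V.exists_apply_eq_one_ker_le_range_le x₀
  obtain ⟨u, hu, hux₀⟩ := V.exists_isIntervalSection_intervalOf v
  obtain ⟨g, hg, hgx₀⟩ :=
    V.dual.exists_isIntervalSection_intervalOf (x₀ := OrderDual.toDual x₀) f
  rw [← PersMod.preimage_intervalOf_eq_dual_intervalOf hfv hker hrange] at hg
  have hf := hg.isIntervalCosection_of_dual
  have hx₀ : x₀ ∈ V.intervalOf v := Or.inl PersMod.self_mem_liftSet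
  have hpair : ∀ x ∈ V.intervalOf v, g (OrderDual.toDual x) (u x) = 1 := by
    have h₀ : g (OrderDual.toDual x₀) (u x₀) = 1 := by
      rw [hgx₀, hux₀]
      exact hfv
    intro x hx
    rcases le_total x x₀ with h | h
    · exact (hu.pairing_eq_of_le hf h hx hx₀).symm.trans h₀
    · exact (hu.pairing_eq_of_le hf h hx₀ hx).trans h₀
  exact ⟨hu.spanSubmod, hf.kerSubmod, PersMod.isCompl_spanSubmod_kerSubmod hu hf hpair,
    PersMod.isIntervalModule_spanSubmod (PersMod.isPosetInterval_intervalOf v) hu hf hpair⟩
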